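/- arXiv:1607.05593 — 3 statements merged into one kernel-verified Lean document; each statement's English description precedes it below -/
import Mathlib

section
/- Let K be the subgroup of SO(4) consisting of the block-diagonal matrices diag(A, I₂) with A ∈ SO(2). Then the normalizer of K in SO(4) is exactly the subgroup S(O(2)×O(2)) of block-diagonal matrices diag(C, D) with C, D ∈ O(2) and det(C)·det(D) = 1. -/
/-!
In the block decomposition `4 = 2 + 2`, conjugating `diag(A, 1)` by an orthogonal `diag(C, D)`
gives `diag(C A Cᵀ, 1)`, so `S(O(2) × O(2))` normalizes `K`. Conversely, if `g` normalizes `K`,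
then `g diag(J, 1) = diag(B, 1) g` for the quarter turn `J` and some `B ∈ SO(2)` conjugate to `J`,
hence `B ≠ 1`. Comparing off-diagonal blocks gives `(B - 1) g₁₂ = 0` and `g₂₁ (J - 1) = 0`; a
plane rotation other than the identity does not have `1` as an eigenvalue, so both blocks vanish.
-/

open Matrix

def Kset : Set (Matrix (Fin 4) (Fin 4) ℝ) :=
  {k | ∃ A : Matrix (Fin 2) (Fin 2) ℝ, A ∈ Matrix.orthogonalGroup (Fin 2) ℝ ∧ A.det = 1 ∧
        k = !![A 0 0, A 0 1, 0, 0;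
               A 1 0, A 1 1, 0, 0;
               0, 0, 1, 0;
               0, 0, 0, 1]}

section Blocks

variable {n m : Type*} [Fintype n] [Fintype m] [DecidableEq n] [DecidableEq m]

theorem offDiag_eq_zero_of_fromBlocks_mul_eq {α : Type*} [Ring α]
    {P J B : Matrix n n α} {Q : Matrix n m α} {R : Matrix m n α} {S : Matrix m m α}
    (h : fromBlocks P Q R S * fromBlocks J 0 0 1 = fromBlocks B 0 0 1 * fromBlocks P Q R S)
    (hJ : IsUnit (J - 1)) (hB : IsUnit (B - 1)) : Q = 0 ∧ R = 0 := by
  simp only [fromBlocks_multiply, fromBlocks_inj, Matrix.mul_zero, Matrix.zero_mul, add_zero,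
    zero_add, Matrix.mul_one, Matrix.one_mul] at h
  obtain ⟨-, hQ, hR, -⟩ := h
  constructor
  · calc Q = (↑hB.unit⁻¹ : Matrix n n α) * ((B - 1) * Q) := by
          rw [← Matrix.mul_assoc, hB.val_inv_mul, Matrix.one_mul]
      _ = 0 := by rw [Matrix.sub_mul, Matrix.one_mul, ← hQ, sub_self, Matrix.mul_zero]
  · calc R = R * (J - 1) * (↑hJ.unit⁻¹ : Matrix n n α) := by
          rw [Matrix.mul_assoc, hJ.mul_val_inv, Matrix.mul_one]
      _ = 0 := by rw [Matrix.mul_sub, Matrix.mul_one, hR, sub_self, Matrix.zero_mul]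

variable {R : Type*} [CommRing R]

theorem transpose_mem_orthogonalGroup {C : Matrix n n R} (hC : C ∈ orthogonalGroup n R) :
    Cᵀ ∈ orthogonalGroup n R := by
  rw [mem_orthogonalGroup_iff, transpose_transpose, ← mem_orthogonalGroup_iff']
  exact hC

theorem fromBlocks_mem_orthogonalGroup_iff {C : Matrix n n R} {D : Matrix m m R} :
    fromBlocks C 0 0 D ∈ orthogonalGroup (n ⊕ m) R ↔
      C ∈ orthogonalGroup n R ∧ D ∈ orthogonalGroup m R := by
  simp only [mem_orthogonalGroup_iff, fromBlocks_transpose, fromBlocks_multiply,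
    transpose_zero, Matrix.mul_zero, Matrix.zero_mul, add_zero, zero_add, ← fromBlocks_one,
    fromBlocks_inj, true_and]

variable (n m R) in
def soFirstBlock : Set (Matrix (n ⊕ m) (n ⊕ m) R) :=
  {X | ∃ A ∈ specialOrthogonalGroup n R, X = fromBlocks A 0 0 1}

theorem fromBlocks_conj_mem_soFirstBlock {C : Matrix n n R} {D : Matrix m m R}
    (hC : C ∈ orthogonalGroup n R) (hD : D ∈ orthogonalGroup m R)
    {X : Matrix (n ⊕ m) (n ⊕ m) R} (hX : X ∈ soFirstBlock n m R) :
    fromBlocks C 0 0 D * X * (fromBlocks C 0 0 D)ᵀ ∈ soFirstBlock n m R := by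
  obtain ⟨A, hA, rfl⟩ := hX
  obtain ⟨hA, hA_det⟩ := mem_specialOrthogonalGroup_iff.mp hA
  refine ⟨C * A * Cᵀ, mem_specialOrthogonalGroup_iff.mpr ⟨?_, ?_⟩, ?_⟩
  · exact mul_mem (mul_mem hC hA) (transpose_mem_orthogonalGroup hC)
  · rw [det_mul, det_mul, hA_det, mul_one, ← det_mul, (mem_orthogonalGroup_iff _ _).mp hC,
      det_one]
  · simp only [fromBlocks_transpose, fromBlocks_multiply, transpose_zero, Matrix.mul_zero,
      Matrix.zero_mul, add_zero, zero_add, Matrix.mul_one, (mem_orthogonalGroup_iff _ _).mp hD]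

theorem mem_soFirstBlock_iff_fromBlocks_conj_mem {C : Matrix n n R} {D : Matrix m m R}
    (hC : C ∈ orthogonalGroup n R) (hD : D ∈ orthogonalGroup m R)
    (X : Matrix (n ⊕ m) (n ⊕ m) R) :
    X ∈ soFirstBlock n m R ↔
      fromBlocks C 0 0 D * X * (fromBlocks C 0 0 D)ᵀ ∈ soFirstBlock n m R := by
  refine ⟨fromBlocks_conj_mem_soFirstBlock hC hD, fun hX => ?_⟩
  have hGtG := (mem_orthogonalGroup_iff' _ _).mp
    (fromBlocks_mem_orthogonalGroup_iff.mpr ⟨hC, hD⟩)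
  have hT : fromBlocks Cᵀ 0 0 Dᵀ = (fromBlocks C 0 0 D)ᵀ := by
    rw [fromBlocks_transpose, transpose_zero, transpose_zero]
  have := fromBlocks_conj_mem_soFirstBlock (transpose_mem_orthogonalGroup hC)
    (transpose_mem_orthogonalGroup hD) hX
  rwa [hT, transpose_transpose, ← Matrix.mul_assoc, ← Matrix.mul_assoc, hGtG, Matrix.one_mul,
    Matrix.mul_assoc, hGtG, Matrix.mul_one] at this

end Blocks

theorem isUnit_sub_one_of_mem_specialOrthogonalGroup_fin_two {K : Type*} [Field K]
    [NeZero (2 : K)] {B : Matrix (Fin 2) (Fin 2) K}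
    (hB : B ∈ specialOrthogonalGroup (Fin 2) K) (hB1 : B ≠ 1) : IsUnit (B - 1) := by
  obtain ⟨hdiag, hanti, hsq⟩ := mem_specialOrthogonalGroup_fin_two_iff.mp hB
  rw [isUnit_iff_isUnit_det, isUnit_iff_ne_zero]
  have hdet : (B - 1).det = 2 * (1 - B 0 0) := by
    rw [det_fin_two]
    simp only [Matrix.sub_apply, one_apply_eq, one_apply_ne Fin.zero_ne_one,
      one_apply_ne Fin.zero_ne_one.symm]
    linear_combination hsq + (1 - B 0 0) * hdiag - B 0 1 * hanti
  intro h0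
  have h00 : B 0 0 = 1 := by
    rw [hdet, mul_eq_zero, sub_eq_zero] at h0
    exact (h0.resolve_left two_ne_zero).symm
  have h01 : B 0 1 = 0 := by
    rw [h00] at hsq
    exact pow_eq_zero_iff two_ne_zero |>.mp (by linear_combination hsq)
  have h10 : B 1 0 = 0 := by linear_combination hanti - h01
  refine hB1 (Matrix.ext fun i j => ?_)
  fin_cases i <;> fin_cases j <;> simp [h00, h01, h10, ← hdiag]

section RotationsOfThePlane

variable {K : Type*} [Field K] [NeZero (2 : K)] {m : Type*} [Fintype m] [DecidableEq m]

theorem exists_eq_fromBlocks_of_conj_mem_soFirstBlock {J : Matrix (Fin 2) (Fin 2) K}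
    (hJ : J ∈ specialOrthogonalGroup (Fin 2) K) (hJ1 : J ≠ 1)
    {G : Matrix (Fin 2 ⊕ m) (Fin 2 ⊕ m) K} (hG : G ∈ orthogonalGroup (Fin 2 ⊕ m) K)
    (h : G * fromBlocks J 0 0 1 * Gᵀ ∈ soFirstBlock (Fin 2) m K) :
    ∃ C D, G = fromBlocks C 0 0 D := by
  have hGtG := (mem_orthogonalGroup_iff' _ _).mp hG
  obtain ⟨B, hB, hGB⟩ := h
  have hcomm : G * fromBlocks J 0 0 1 = fromBlocks B 0 0 1 * G := by
    rw [← hGB, Matrix.mul_assoc _ Gᵀ, hGtG, Matrix.mul_one]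
  have hB1 : B ≠ 1 := by
    rintro rfl
    rw [fromBlocks_one, Matrix.one_mul] at hcomm
    have hJ_eq : fromBlocks J 0 0 1 = fromBlocks (1 : Matrix (Fin 2) (Fin 2) K) 0 0 1 :=
      calc fromBlocks J 0 0 1 = Gᵀ * (G * fromBlocks J 0 0 1) := by
            rw [← Matrix.mul_assoc, hGtG, Matrix.one_mul]
        _ = _ := by rw [hcomm, hGtG, fromBlocks_one]
    exact hJ1 (fromBlocks_inj.mp hJ_eq).1
  rw [← fromBlocks_toBlocks G] at hcomm ⊢
  obtain ⟨hQ, hR⟩ := offDiag_eq_zero_of_fromBlocks_mul_eq hcomm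
    (isUnit_sub_one_of_mem_specialOrthogonalGroup_fin_two hJ hJ1)
    (isUnit_sub_one_of_mem_specialOrthogonalGroup_fin_two hB hB1)
  exact ⟨_, _, by rw [hQ, hR]⟩

theorem conj_mem_soFirstBlock_iff_exists_fromBlocks {G : Matrix (Fin 2 ⊕ m) (Fin 2 ⊕ m) K}
    (hG : G ∈ orthogonalGroup (Fin 2 ⊕ m) K) :
    (∀ X, X ∈ soFirstBlock (Fin 2) m K ↔ G * X * Gᵀ ∈ soFirstBlock (Fin 2) m K) ↔
      ∃ C D, C ∈ orthogonalGroup (Fin 2) K ∧ D ∈ orthogonalGroup m K ∧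
        G = fromBlocks C 0 0 D := by
  constructor
  · intro hG_norm
    have hJ : !![0, -1; 1, 0] ∈ specialOrthogonalGroup (Fin 2) K := by norm_num
    have hJ1 : !![(0 : K), -1; 1, 0] ≠ 1 := fun h => by simpa using congrFun (congrFun h 0) 0
    obtain ⟨C, D, rfl⟩ :=
      exists_eq_fromBlocks_of_conj_mem_soFirstBlock hJ hJ1 hG ((hG_norm _).mp ⟨_, hJ, rfl⟩)
    obtain ⟨hC, hD⟩ := fromBlocks_mem_orthogonalGroup_iff.mp hG
    exact ⟨C, D, hC, hD, rfl⟩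
  · rintro ⟨C, D, hC, hD, rfl⟩
    exact mem_soFirstBlock_iff_fromBlocks_conj_mem hC hD

end RotationsOfThePlane

theorem reindex_mem_orthogonalGroup_iff {n m R : Type*} [Fintype n] [Fintype m] [DecidableEq n]
    [DecidableEq m] [CommRing R] (e : n ≃ m) {A : Matrix n n R} :
    reindex e e A ∈ orthogonalGroup m R ↔ A ∈ orthogonalGroup n R := by
  rw [mem_orthogonalGroup_iff, mem_orthogonalGroup_iff, transpose_reindex,
    ← coe_reindexAlgEquiv R R, ← map_mul, ← map_one (reindexAlgEquiv R R e),
    (reindexAlgEquiv R R e).injective.eq_iff]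

section FinFour

variable (R : Type*) [CommRing R]

abbrev flattenBlocks : Matrix (Fin 2 ⊕ Fin 2) (Fin 2 ⊕ Fin 2) R ≃ₐ[R] Matrix (Fin 4) (Fin 4) R :=
  reindexAlgEquiv R R finSumFinEquiv

theorem flattenBlocks_fromBlocks (C D : Matrix (Fin 2) (Fin 2) R) :
    flattenBlocks R (fromBlocks C 0 0 D) =
      !![C 0 0, C 0 1, 0, 0; C 1 0, C 1 1, 0, 0; 0, 0, D 0 0, D 0 1; 0, 0, D 1 0, D 1 1] := by
  ext i j
  fin_cases i <;> fin_cases j <;> rfl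

end FinFour

theorem flattenBlocks_mem_Kset_iff (X : Matrix (Fin 2 ⊕ Fin 2) (Fin 2 ⊕ Fin 2) ℝ) :
    flattenBlocks ℝ X ∈ Kset ↔ X ∈ soFirstBlock (Fin 2) (Fin 2) ℝ := by
  have hK (A : Matrix (Fin 2) (Fin 2) ℝ) :
      !![A 0 0, A 0 1, 0, 0; A 1 0, A 1 1, 0, 0; 0, 0, 1, 0; 0, 0, 0, 1] =
        flattenBlocks ℝ (fromBlocks A 0 0 1) := by
    rw [flattenBlocks_fromBlocks]
    simp
  simp only [Kset, soFirstBlock, Set.mem_ofPred_eq, hK, (flattenBlocks ℝ).injective.eq_iff,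
    mem_specialOrthogonalGroup_iff, and_assoc]

/-- The normalizer of `K` in `SO(4)` is exactly `S(O(2) × O(2))`: block-diagonal
matrices `diag(C, D)` with `C, D ∈ O(2)` and `det C · det D = 1`. -/
theorem stmt5 (g : Matrix (Fin 4) (Fin 4) ℝ)
    (hg : g ∈ Matrix.orthogonalGroup (Fin 4) ℝ) (hdet : g.det = 1) :
    (∀ k, k ∈ Kset ↔ g * k * g⁻¹ ∈ Kset) ↔
      ∃ C D : Matrix (Fin 2) (Fin 2) ℝ,
        C ∈ Matrix.orthogonalGroup (Fin 2) ℝ ∧ D ∈ Matrix.orthogonalGroup (Fin 2) ℝ ∧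
        C.det * D.det = 1 ∧
        g = !![C 0 0, C 0 1, 0, 0;
               C 1 0, C 1 1, 0, 0;
               0, 0, D 0 0, D 0 1;
               0, 0, D 1 0, D 1 1] := by
  obtain ⟨G, rfl⟩ := (flattenBlocks ℝ).surjective g
  rw [coe_reindexAlgEquiv, reindex_mem_orthogonalGroup_iff] at hg
  rw [coe_reindexAlgEquiv, det_reindex_self] at hdet
  have hinv : (flattenBlocks ℝ G)⁻¹ = flattenBlocks ℝ Gᵀ := by
    rw [coe_reindexAlgEquiv, inv_reindex, inv_eq_left_inv ((mem_orthogonalGroup_iff' _ _).mp hg)]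
  rw [← (flattenBlocks ℝ).toEquiv.forall_congr_right]
  simp only [AlgEquiv.toEquiv_eq_coe, EquivLike.coe_coe, hinv, ← map_mul,
    flattenBlocks_mem_Kset_iff, conj_mem_soFirstBlock_iff_exists_fromBlocks hg,
    ← flattenBlocks_fromBlocks, (flattenBlocks ℝ).injective.eq_iff]
  refine exists₂_congr fun C D => ⟨?_, ?_⟩
  · rintro ⟨hC, hD, rfl⟩
    exact ⟨hC, hD, by rwa [det_fromBlocks_zero₂₁] at hdet, rfl⟩
  · rintro ⟨hC, hD, -, rfl⟩
    exact ⟨hC, hD, rfl⟩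
end

section
/- Consider the action of SU(2) × O(2) on ℂ² ⊕ ℂ², where B ∈ SU(2) acts on the first summand ℂ² by matrix multiplication and T ∈ O(2) acts on the second summand ℂ² by the real matrix T with entries regarded as complex numbers. If u ∈ ℂ² is nonzero and w = (w₁, w₂) ∈ ℂ² has w₁, w₂ linearly independent over ℝ (as elements of ℂ regarded as a real vector space), then the stabilizer of (u, w) is trivial: the only pair (B, T) fixing (u, w) is the identity. -/
open Matrix

theorem aux_sq (x y : ℝ) (h : x ^ 2 + y ^ 2 = 0) : x = 0 ∧ y = 0 := by
  constructor <;> nlinarith [sq_nonneg x, sq_nonneg y]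

set_option maxHeartbeats 1000000

/-- For the action of `SU(2) × O(2)` on `ℂ² ⊕ ℂ²` (with `B ∈ SU(2)` acting on the first
summand and `T ∈ O(2)` acting on the second via complexification): if `u ≠ 0` and the
entries `w 0`, `w 1` of `w` are linearly independent over `ℝ`, then the stabilizer of
`(u, w)` is trivial. -/
theorem stmt12 (B : Matrix (Fin 2) (Fin 2) ℂ) (hB : B ∈ Matrix.specialUnitaryGroup (Fin 2) ℂ)
    (T : Matrix (Fin 2) (Fin 2) ℝ) (hT : T ∈ Matrix.orthogonalGroup (Fin 2) ℝ)
    (u w : Fin 2 → ℂ) (hu : u ≠ 0) (hw : LinearIndependent ℝ ![w 0, w 1])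
    (hfix : B.mulVec u = u ∧ (T.map Complex.ofReal).mulVec w = w) :
    B = 1 ∧ T = 1 := by
  obtain ⟨hfixB, hfixT⟩ := hfix
  rw [Matrix.mem_specialUnitaryGroup_iff] at hB
  obtain ⟨hBu, hBdet⟩ := hB
  rw [Matrix.mem_unitaryGroup_iff'] at hBu
  constructor
  · -- B = 1
    -- det (B - 1) = 0
    have hker : (B - 1).mulVec u = 0 := by
      rw [Matrix.sub_mulVec, Matrix.one_mulVec, hfixB, sub_self]
    have hdet0 : (B - 1).det = 0 := by
      rw [← Matrix.exists_mulVec_eq_zero_iff]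
      exact ⟨u, hu, hker⟩
    have hdet1 : B 0 0 * B 1 1 - B 0 1 * B 1 0 = 1 := by
      rw [Matrix.det_fin_two] at hBdet; exact hBdet
    have hdet0' : (B 0 0 - 1) * (B 1 1 - 1) - B 0 1 * B 1 0 = 0 := by
      rw [Matrix.det_fin_two] at hdet0
      simpa using hdet0
    have htr : B 0 0 + B 1 1 = 2 := by linear_combination hdet1 - hdet0'
    have h00 : (starRingEnd ℂ) (B 0 0) * B 0 0 + (starRingEnd ℂ) (B 1 0) * B 1 0 = 1 := by
      have := congrFun (congrFun hBu 0) 0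
      simpa [Matrix.mul_apply, Fin.sum_univ_two, Matrix.conjTranspose_apply,
        Matrix.one_apply] using this
    have h11 : (starRingEnd ℂ) (B 0 1) * B 0 1 + (starRingEnd ℂ) (B 1 1) * B 1 1 = 1 := by
      have := congrFun (congrFun hBu 1) 1
      simpa [Matrix.mul_apply, Fin.sum_univ_two, Matrix.conjTranspose_apply,
        Matrix.one_apply] using this
    set a := B 0 0
    set b := B 0 1
    set c := B 1 0
    set d := B 1 1
    have htr_re : a.re + d.re = 2 := by
      have := congrArg Complex.re htr; simpa using this
    have htr_im : a.im + d.im = 0 := by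
      have := congrArg Complex.im htr; simpa using this
    have h00re : a.re ^ 2 + a.im ^ 2 + c.re ^ 2 + c.im ^ 2 = 1 := by
      have := congrArg Complex.re h00
      simp [Complex.add_re, Complex.mul_re, Complex.conj_re, Complex.conj_im] at this
      nlinarith [this]
    have h11re : b.re ^ 2 + b.im ^ 2 + d.re ^ 2 + d.im ^ 2 = 1 := by
      have := congrArg Complex.re h11
      simp [Complex.add_re, Complex.mul_re, Complex.conj_re, Complex.conj_im] at this
      nlinarith [this]
    have hare : a.re = 1 := by
      nlinarith [sq_nonneg (a.re - d.re), sq_nonneg a.im, sq_nonneg d.im,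
        sq_nonneg b.re, sq_nonneg b.im, sq_nonneg c.re, sq_nonneg c.im]
    have hdre : d.re = 1 := by linarith
    have haim : a.im = 0 := by nlinarith [sq_nonneg c.re, sq_nonneg c.im, sq_nonneg a.im]
    have hdim : d.im = 0 := by linarith
    rw [hare, haim] at h00re
    rw [hdre, hdim] at h11re
    norm_num at h00re h11re
    obtain ⟨hcre, hcim⟩ := aux_sq _ _ (by linarith : c.re ^ 2 + c.im ^ 2 = 0)
    obtain ⟨hbre, hbim⟩ := aux_sq _ _ (by linarith : b.re ^ 2 + b.im ^ 2 = 0)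
    have ea : a = 1 := Complex.ext (by simpa using hare) (by simpa using haim)
    have eb : b = 0 := Complex.ext (by simpa using hbre) (by simpa using hbim)
    have ec : c = 0 := Complex.ext (by simpa using hcre) (by simpa using hcim)
    have ed : d = 1 := Complex.ext (by simpa using hdre) (by simpa using hdim)
    ext i j
    fin_cases i <;> fin_cases j <;> simp only [Matrix.one_apply] <;> norm_num
    · exact ea
    · exact eb
    · exact ec
    · exact ed
  · -- T = 1
    have key : ∀ i : Fin 2, (T i 0 : ℂ) * w 0 + (T i 1 : ℂ) * w 1 = w i := by
      intro i
      have := congrFun hfixT i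
      simpa [Matrix.mulVec, dotProduct, Fin.sum_univ_two, Matrix.map_apply] using this
    have hli := Fintype.linearIndependent_iff.mp hw
    have row0 := key 0
    have row1 := key 1
    have h0 : T 0 0 = 1 ∧ T 0 1 = 0 := by
      have := hli ![T 0 0 - 1, T 0 1] (by
        simp [Fin.sum_univ_two, Complex.real_smul]
        push_cast
        linear_combination row0)
      have e0 := this 0
      have e1 := this 1
      simp at e0 e1
      exact ⟨by linarith, e1⟩
    have h1 : T 1 0 = 0 ∧ T 1 1 = 1 := by
      have := hli ![T 1 0, T 1 1 - 1] (by
        simp [Fin.sum_univ_two, Complex.real_smul]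
        push_cast
        linear_combination row1)
      have e0 := this 0
      have e1 := this 1
      simp at e0 e1
      exact ⟨e0, by linarith⟩
    ext i j
    fin_cases i <;> fin_cases j <;>
      simp [h0.1, h0.2, h1.1, h1.2, Matrix.one_apply]
end

section
/- Consider the action of SU(2) × O(2) on ℂ² ⊕ ℂ², where B ∈ SU(2) acts on the first summand ℂ² by matrix multiplication and T ∈ O(2) acts on the second summand ℂ² by the real matrix T with entries regarded as complex numbers. If u ∈ ℂ² is nonzero and w = (w₁, w₂) ∈ ℂ² is nonzero with w₁, w₂ linearly dependent over ℝ (as elements of ℂ regarded as a real vector space), then the stabilizer of (u, w) has exactly two elements; in particular it is isomorphic to the cyclic group of order 2. -/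
/-!
An element `B ∈ SU(2)` satisfies `Bᴴ = adjugate B`, hence `B + Bᴴ = (tr B) • 1`. If `B` fixes a
nonzero `u`, so does `Bᴴ = B⁻¹`, which forces `tr B = 2` and then `(B - 1)ᴴ (B - 1) = 0`, i.e.
`B = 1`. Over `ℝ` the same argument shows that `SO(2)` acts freely on nonzero vectors, so the
stabilizer of a nonzero `v ∈ ℝ²` in `O(2)` meets each coset of `SO(2)` at most once; it is
`{1, R}` with `R` the reflection fixing `v`.
Finally, `ℝ`-dependence of `w 0, w 1` means `w = z • v` with `z ∈ ℂˣ` and `v ∈ ℝ² \ {0}`, and a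
real matrix fixes `z • v` iff it fixes `v`.
-/

open Matrix

/-- The stabilizer of `(u, w) ∈ ℂ² ⊕ ℂ²` for the action of `SU(2) × O(2)`, where
`B ∈ SU(2)` acts on the first summand by matrix multiplication and `T ∈ O(2)` acts on
the second summand via its complexification. -/
def stabilizer (u w : Fin 2 → ℂ) :
    Set (Matrix (Fin 2) (Fin 2) ℂ × Matrix (Fin 2) (Fin 2) ℝ) :=
  {p | p.1 ∈ Matrix.specialUnitaryGroup (Fin 2) ℂ ∧
       p.2 ∈ Matrix.orthogonalGroup (Fin 2) ℝ ∧
       p.1.mulVec u = u ∧ (p.2.map Complex.ofReal).mulVec w = w}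

namespace Matrix

variable {n : Type*} [Fintype n] [DecidableEq n]

theorem adjugate_eq_conjTranspose_of_mem_specialUnitaryGroup {R : Type*} [CommRing R]
    [StarRing R] {A : Matrix n n R} (hA : A ∈ specialUnitaryGroup n R) : adjugate A = Aᴴ := by
  rw [mem_specialUnitaryGroup_iff] at hA
  rw [← star_eq_conjTranspose, ← inv_eq_left_inv hA.1.1, inv_def, hA.2, Ring.inverse_one, one_smul]

theorem add_adjugate_fin_two {R : Type*} [CommRing R] (A : Matrix (Fin 2) (Fin 2) R) :
    A + adjugate A = A.trace • 1 := by
  ext i j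
  fin_cases i <;> fin_cases j <;> simp [adjugate_fin_two, trace_fin_two, add_comm]

open scoped ComplexOrder in
theorem eq_one_of_mem_specialUnitaryGroup_of_mulVec_eq_self {𝕜 : Type*} [RCLike 𝕜]
    {B : Matrix (Fin 2) (Fin 2) 𝕜} (hB : B ∈ specialUnitaryGroup (Fin 2) 𝕜)
    {u : Fin 2 → 𝕜} (hu : u ≠ 0) (hBu : B *ᵥ u = u) : B = 1 := by
  have hBB : Bᴴ * B = 1 := hB.1.1
  have hsum : B + Bᴴ = B.trace • 1 := by
    rw [← adjugate_eq_conjTranspose_of_mem_specialUnitaryGroup hB, add_adjugate_fin_two]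
  have hBHu : Bᴴ *ᵥ u = u := by
    rw [← congrArg (Bᴴ *ᵥ ·) hBu, mulVec_mulVec, hBB, one_mulVec]
  have htrace : B.trace = 2 := by
    refine smul_left_injective 𝕜 hu ?_
    calc B.trace • u = (B + Bᴴ) *ᵥ u := by rw [hsum, smul_mulVec, one_mulVec]
      _ = (2 : 𝕜) • u := by rw [add_mulVec, hBu, hBHu, two_smul]
  have hN : (B - 1)ᴴ * (B - 1) = 0 := by
    calc (B - 1)ᴴ * (B - 1) = Bᴴ * B - (B + Bᴴ) + 1 := by
          simp only [conjTranspose_sub, conjTranspose_one, sub_mul, mul_sub, one_mul, mul_one]; abel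
      _ = 0 := by rw [hBB, hsum, htrace, two_smul]; abel
  exact sub_eq_zero.mp (conjTranspose_mul_self_eq_zero.mp hN)

section lineReflection

variable {K : Type*} [Field K]

/-- The reflection of `Kⁿ` that fixes `v` and negates its orthogonal complement
(minus the Householder reflection of `v`). -/
def lineReflection (v : n → K) : Matrix n n K := (2 / (v ⬝ᵥ v)) • vecMulVec v v - 1

variable {v : n → K}

theorem lineReflection_mulVec_self (hv : v ⬝ᵥ v ≠ 0) : lineReflection v *ᵥ v = v := by
  rw [lineReflection, sub_mulVec, smul_mulVec, vecMulVec_mulVec, one_mulVec, op_smul_eq_smul,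
    smul_smul, div_mul_cancel₀ _ hv, two_smul, add_sub_cancel_right]

theorem transpose_lineReflection (v : n → K) : (lineReflection v)ᵀ = lineReflection v := by
  simp [lineReflection]

theorem lineReflection_mul_self (hv : v ⬝ᵥ v ≠ 0) : lineReflection v * lineReflection v = 1 := by
  have hP : vecMulVec v v * vecMulVec v v = (v ⬝ᵥ v) • vecMulVec v v := by
    rw [vecMulVec_mul_vecMulVec, vecMulVec_smul]
  simp only [lineReflection, sub_mul, mul_sub, smul_mul_smul, hP, smul_smul, mul_one, one_mul]
  rw [show 2 / v ⬝ᵥ v * (2 / v ⬝ᵥ v) * v ⬝ᵥ v = 2 * (2 / v ⬝ᵥ v) by field_simp, mul_smul,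
    two_smul]
  abel

theorem det_lineReflection (hv : v ⬝ᵥ v ≠ 0) :
    (lineReflection v).det = -(-1) ^ Fintype.card n := by
  have hR : lineReflection v =
      -(1 + replicateCol Unit (-(2 / (v ⬝ᵥ v)) • v) * replicateRow Unit v) := by
    rw [lineReflection, ← vecMulVec_eq, smul_vecMulVec, neg_smul]; abel
  rw [hR, det_neg, det_one_add_replicateCol_mul_replicateRow, dotProduct_smul, smul_eq_mul,
    neg_mul, div_mul_cancel₀ _ hv]
  ring

theorem lineReflection_mem_orthogonalGroup (hv : v ⬝ᵥ v ≠ 0) :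
    lineReflection v ∈ orthogonalGroup n K := by
  rw [mem_orthogonalGroup_iff, transpose_lineReflection, lineReflection_mul_self hv]

end lineReflection

theorem eq_one_or_eq_lineReflection_of_mulVec_eq_self {T : Matrix (Fin 2) (Fin 2) ℝ}
    (hT : T ∈ orthogonalGroup (Fin 2) ℝ) {v : Fin 2 → ℝ} (hv : v ≠ 0) (hTv : T *ᵥ v = v) :
    T = 1 ∨ T = lineReflection v := by
  have hvv : v ⬝ᵥ v ≠ 0 := dotProduct_self_eq_zero.not.mpr hv
  have hSO : ∀ S ∈ orthogonalGroup (Fin 2) ℝ, S.det = 1 → S *ᵥ v = v → S = 1 :=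
    fun S hS hdet hSv => eq_one_of_mem_specialUnitaryGroup_of_mulVec_eq_self ⟨hS, hdet⟩ hv hSv
  have hdet : T.det * T.det = 1 := by
    simpa using (det_of_mem_unitary hT).1
  rcases mul_self_eq_one_iff.mp hdet with hdet | hdet
  · exact .inl (hSO T hT hdet hTv)
  · right
    set R := lineReflection v
    have hRT : R * T = 1 := by
      refine hSO _ (mul_mem (lineReflection_mem_orthogonalGroup hvv) hT) ?_ ?_
      · rw [det_mul, hdet, det_lineReflection hvv]; norm_num
      · rw [← mulVec_mulVec, hTv, lineReflection_mulVec_self hvv]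
    calc T = R * R * T := by rw [lineReflection_mul_self hvv, one_mul]
      _ = R := by rw [mul_assoc, hRT, mul_one]

end Matrix

theorem exists_eq_smul_ofReal_of_not_linearIndependent {w : Fin 2 → ℂ} (hw : w ≠ 0)
    (hdep : ¬ LinearIndependent ℝ ![w 0, w 1]) :
    ∃ (z : ℂ) (v : Fin 2 → ℝ), z ≠ 0 ∧ v ≠ 0 ∧ w = z • ((↑) ∘ v) := by
  by_cases h0 : w 0 = 0
  · have h1 : w 1 ≠ 0 := fun h1 => hw (by ext i; fin_cases i <;> simp [h0, h1])
    refine ⟨w 1, ![0, 1], h1, by simp, ?_⟩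
    ext i; fin_cases i <;> simp [h0]
  · obtain ⟨a, ha⟩ : ∃ a : ℝ, a • w 0 = w 1 := by
      simpa [LinearIndependent.pair_iff' h0] using hdep
    refine ⟨w 0, ![1, a], h0, by simp, ?_⟩
    ext i; fin_cases i <;> simp [← ha, Complex.real_smul, mul_comm]

theorem map_ofReal_mulVec_smul_eq_iff {n : Type*} [Fintype n] {T : Matrix n n ℝ} {z : ℂ}
    (hz : z ≠ 0) {v : n → ℝ} :
    T.map Complex.ofReal *ᵥ z • ((↑) ∘ v) = z • ((↑) ∘ v) ↔ T *ᵥ v = v := by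
  have hmap : T.map Complex.ofReal *ᵥ ((↑) ∘ v) = (↑) ∘ (T *ᵥ v) :=
    funext fun i => (RingHom.map_mulVec Complex.ofRealHom T v i).symm
  rw [mulVec_smul, hmap, (smul_right_injective _ hz).eq_iff,
    Complex.ofReal_injective.comp_left.eq_iff]

theorem stabilizer_smul_ofReal_eq {u : Fin 2 → ℂ} (hu : u ≠ 0) {z : ℂ} (hz : z ≠ 0)
    {v : Fin 2 → ℝ} (hv : v ≠ 0) :
    stabilizer u (z • ((↑) ∘ v)) = {(1, 1), (1, lineReflection v)} := by
  have hvv : v ⬝ᵥ v ≠ 0 := dotProduct_self_eq_zero.not.mpr hv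
  ext ⟨B, T⟩
  simp only [stabilizer, Set.mem_ofPred_eq, Set.mem_insert_iff, Set.mem_singleton_iff,
    Prod.mk.injEq, map_ofReal_mulVec_smul_eq_iff hz]
  constructor
  · rintro ⟨hB, hT, hBu, hTv⟩
    have hB1 := eq_one_of_mem_specialUnitaryGroup_of_mulVec_eq_self hB hu hBu
    rcases eq_one_or_eq_lineReflection_of_mulVec_eq_self hT hv hTv with hT1 | hTR
    · exact .inl ⟨hB1, hT1⟩
    · exact .inr ⟨hB1, hTR⟩
  · rintro (⟨rfl, rfl⟩ | ⟨rfl, rfl⟩)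
    · exact ⟨one_mem _, one_mem _, one_mulVec u, one_mulVec v⟩
    · exact ⟨one_mem _, lineReflection_mem_orthogonalGroup hvv, one_mulVec u,
        lineReflection_mulVec_self hvv⟩

/-- If `u ≠ 0` and `w ≠ 0` with entries `w 0`, `w 1` linearly dependent over `ℝ`, then
the stabilizer of `(u, w)` under `SU(2) × O(2)` has exactly two elements; it contains
the identity and every element squares to the identity, so it is isomorphic to the
cyclic group of order 2. -/
theorem stmt15 (u w : Fin 2 → ℂ) (hu : u ≠ 0) (hw : w ≠ 0)
    (hdep : ¬ LinearIndependent ℝ ![w 0, w 1]) :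
    (∃ p q, p ≠ q ∧ stabilizer u w = {p, q}) ∧
    ((1, 1) ∈ stabilizer u w) ∧
    (∀ p ∈ stabilizer u w,
      p.1 * p.1 = (1 : Matrix (Fin 2) (Fin 2) ℂ) ∧
      p.2 * p.2 = (1 : Matrix (Fin 2) (Fin 2) ℝ)) := by
  obtain ⟨z, v, hz, hv, rfl⟩ := exists_eq_smul_ofReal_of_not_linearIndependent hw hdep
  have hvv : v ⬝ᵥ v ≠ 0 := dotProduct_self_eq_zero.not.mpr hv
  rw [stabilizer_smul_ofReal_eq hu hz hv]
  refine ⟨⟨_, _, fun h => ?_, rfl⟩, .inl rfl, ?_⟩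
  · have hdet := congrArg (fun p => p.2.det) h
    norm_num [det_lineReflection hvv] at hdet
  · rintro p (rfl | rfl)
    · exact ⟨one_mul 1, one_mul 1⟩
    · exact ⟨one_mul 1, lineReflection_mul_self hvv⟩
end
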